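/- Let q > 1 be a real number. Let X and Y be positive semidefinite matrices (of finite sizes d₁ and d₂ respectively) with ‖X‖_q = ‖Y‖_q = 1. Then there exists a positive semidefinite matrix Z of size d₁·d₂ with ‖Z‖_q = 1 satisfying the matrix inequality Z ≥ X ⊗ 𝟙 + 𝟙 ⊗ Y − 𝟙 (i.e., Z − (X ⊗ 𝟙 + 𝟙 ⊗ Y − 𝟙) is positive semidefinite), where X ⊗ 𝟙 and 𝟙 ⊗ Y denote Kronecker products with identity matrices of the appropriate sizes and 𝟙 on its own denotes the identity matrix of size d₁·d₂. -/

import Mathlib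

open Matrix ComplexOrder Kronecker

/-- `Tr[A^q]` for a Hermitian matrix `A`, where `A^q` is the matrix power obtained by raising
each eigenvalue of `A` to the (real) power `q`; defined as `0` if `A` is not Hermitian. -/
noncomputable def traceRpow {d : Type*} [Fintype d] [DecidableEq d]
    (q : ℝ) (A : Matrix d d ℂ) : ℝ :=
  if hA : A.IsHermitian then ∑ i, hA.eigenvalues i ^ q else 0

/-- The Schatten `q`-norm `‖A‖_q = (Tr[A^q])^{1/q}` of a positive semidefinite matrix `A`. -/
noncomputable def schattenNorm {d : Type*} [Fintype d] [DecidableEq d]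
    (q : ℝ) (A : Matrix d d ℂ) : ℝ :=
  traceRpow q A ^ (1 / q)

/-!
Take `Z = X ⊗ Y`. The eigenvalues of `X ⊗ Y` are the products of those of `X` and `Y`, so
`‖X ⊗ Y‖_q = ‖X‖_q ‖Y‖_q = 1`. Every eigenvalue of a positive semidefinite matrix is at most
its Schatten norm, so `X ≤ 1` and `Y ≤ 1`, and then
`X ⊗ Y - (X ⊗ 1 + 1 ⊗ Y - 1) = (1 - X) ⊗ (1 - Y)` is positive semidefinite.
-/

namespace Matrix

open Polynomial

lemma one_sub_kronecker_one_sub {n m R : Type*} [DecidableEq n] [DecidableEq m] [CommRing R]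
    (A : Matrix n n R) (B : Matrix m m R) :
    (1 - A) ⊗ₖ (1 - B) = A ⊗ₖ B - (A ⊗ₖ 1 + 1 ⊗ₖ B - 1) := by
  ext ⟨i, j⟩ ⟨k, l⟩
  by_cases hik : i = k <;> by_cases hjl : j = l <;> simp [hik, hjl] <;> ring

variable {𝕜 : Type*} [RCLike 𝕜] {n m : Type*} [Fintype n] [Fintype m] [DecidableEq n]
  [DecidableEq m]

lemma charpoly_conjStarAlgAut (U : unitaryGroup n 𝕜) (A : Matrix n n 𝕜) :
    (Unitary.conjStarAlgAut 𝕜 _ U A).charpoly = A.charpoly := by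
  rw [Unitary.conjStarAlgAut_apply, charpoly_mul_comm, ← mul_assoc]
  simp

lemma IsHermitian.charpoly_kronecker {A : Matrix n n 𝕜} {B : Matrix m m 𝕜}
    (hA : A.IsHermitian) (hB : B.IsHermitian) :
    (A ⊗ₖ B).charpoly =
      ∏ p : n × m, (X - C ((hA.eigenvalues p.1 * hB.eigenvalues p.2 : ℝ) : 𝕜)) := by
  let U : unitaryGroup (n × m) 𝕜 :=
    ⟨_, kronecker_mem_unitary hA.eigenvectorUnitary.2 hB.eigenvectorUnitary.2⟩
  have hAB : A ⊗ₖ B = Unitary.conjStarAlgAut 𝕜 _ U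
      (diagonal fun p => ((hA.eigenvalues p.1 * hB.eigenvalues p.2 : ℝ) : 𝕜)) := by
    conv_lhs => rw [hA.spectral_theorem, hB.spectral_theorem]
    simp only [Unitary.conjStarAlgAut_apply, mul_kronecker_mul, diagonal_kronecker_diagonal, U]
    simp [star_eq_conjTranspose, conjTranspose_kronecker]
  rw [hAB, charpoly_conjStarAlgAut, charpoly_diagonal]

lemma IsHermitian.map_eigenvalues_eq_of_charpoly_eq {A : Matrix n n 𝕜} (hA : A.IsHermitian)
    {ι : Type*} [Fintype ι] {d : ι → ℝ} (h : A.charpoly = ∏ i, (X - C (d i : 𝕜))) :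
    Finset.univ.val.map hA.eigenvalues = Finset.univ.val.map d := by
  have hroots := hA.roots_charpoly_eq_eigenvalues
  rw [h, roots_prod _ _ (by simp [Finset.prod_ne_zero_iff, X_sub_C_ne_zero])] at hroots
  simp only [roots_X_sub_C, Multiset.bind_singleton] at hroots
  rw [← Multiset.map_map, ← Function.comp_def, ← Multiset.map_map RCLike.ofReal d] at hroots
  exact (Multiset.map_injective RCLike.ofReal_injective hroots).symm

lemma IsHermitian.sum_eigenvalues_kronecker {M : Type*} [AddCommMonoid M] {A : Matrix n n 𝕜}
    {B : Matrix m m 𝕜} (hA : A.IsHermitian) (hB : B.IsHermitian) (hAB : (A ⊗ₖ B).IsHermitian)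
    (f : ℝ → M) :
    ∑ p, f (hAB.eigenvalues p) = ∑ i, ∑ j, f (hA.eigenvalues i * hB.eigenvalues j) := by
  have h := congrArg (fun s => (s.map f).sum)
    (hAB.map_eigenvalues_eq_of_charpoly_eq (hA.charpoly_kronecker hB))
  simpa only [Multiset.map_map, Function.comp_def, Finset.sum_map_val, Fintype.sum_prod_type]
    using h

lemma IsHermitian.posSemidef_one_sub_of_eigenvalues_le_one {A : Matrix n n 𝕜}
    (hA : A.IsHermitian) (h : ∀ i, hA.eigenvalues i ≤ 1) : (1 - A).PosSemidef := by
  open scoped MatrixOrder in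
  have : A ≤ algebraMap ℝ _ 1 := le_algebraMap_of_spectrum_le (by
    rw [hA.spectrum_real_eq_range_eigenvalues]
    rintro _ ⟨i, rfl⟩
    exact h i) hA.isSelfAdjoint
  simpa [le_iff] using this

end Matrix

open Matrix

variable {n m : Type*} [Fintype n] [Fintype m] [DecidableEq n] [DecidableEq m]

lemma traceRpow_eq_sum_eigenvalues {A : Matrix n n ℂ} (hA : A.IsHermitian) (q : ℝ) :
    traceRpow q A = ∑ i, hA.eigenvalues i ^ q :=
  dif_pos hA

lemma traceRpow_nonneg {A : Matrix n n ℂ} (hA : A.PosSemidef) (q : ℝ) :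
    0 ≤ traceRpow q A := by
  rw [traceRpow_eq_sum_eigenvalues hA.1]
  exact Finset.sum_nonneg fun i _ => Real.rpow_nonneg (hA.eigenvalues_nonneg i) q

lemma traceRpow_kronecker {A : Matrix n n ℂ} {B : Matrix m m ℂ} (hA : A.PosSemidef)
    (hB : B.PosSemidef) (q : ℝ) : traceRpow q (A ⊗ₖ B) = traceRpow q A * traceRpow q B := by
  rw [traceRpow_eq_sum_eigenvalues (hA.kronecker hB).1, traceRpow_eq_sum_eigenvalues hA.1,
    traceRpow_eq_sum_eigenvalues hB.1,
    hA.1.sum_eigenvalues_kronecker hB.1 (hA.kronecker hB).1 (· ^ q), Finset.sum_mul_sum]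
  simp only [Real.mul_rpow (hA.eigenvalues_nonneg _) (hB.eigenvalues_nonneg _)]

lemma schattenNorm_kronecker {A : Matrix n n ℂ} {B : Matrix m m ℂ} (hA : A.PosSemidef)
    (hB : B.PosSemidef) (q : ℝ) :
    schattenNorm q (A ⊗ₖ B) = schattenNorm q A * schattenNorm q B := by
  rw [schattenNorm, traceRpow_kronecker hA hB,
    Real.mul_rpow (traceRpow_nonneg hA q) (traceRpow_nonneg hB q), schattenNorm, schattenNorm]

lemma eigenvalues_le_schattenNorm {A : Matrix n n ℂ} (hA : A.PosSemidef) {q : ℝ} (hq : 0 < q)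
    (i : n) : hA.1.eigenvalues i ≤ schattenNorm q A := by
  have hle : hA.1.eigenvalues i ^ q ≤ traceRpow q A := by
    rw [traceRpow_eq_sum_eigenvalues hA.1]
    exact Finset.single_le_sum (f := fun j => hA.1.eigenvalues j ^ q)
      (fun j _ => Real.rpow_nonneg (hA.eigenvalues_nonneg j) q) (Finset.mem_univ i)
  calc hA.1.eigenvalues i = (hA.1.eigenvalues i ^ q) ^ (1 / q) := by
        rw [← Real.rpow_mul (hA.eigenvalues_nonneg i), mul_one_div_cancel hq.ne', Real.rpow_one]
    _ ≤ schattenNorm q A :=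
        Real.rpow_le_rpow (Real.rpow_nonneg (hA.eigenvalues_nonneg i) q) hle (by positivity)

/-- For `q > 1` and positive semidefinite matrices `X`, `Y` with `‖X‖_q = ‖Y‖_q = 1`, there
exists a positive semidefinite `Z` with `‖Z‖_q = 1` and `Z ≥ X ⊗ 𝟙 + 𝟙 ⊗ Y − 𝟙`
(i.e. the difference is positive semidefinite). -/
theorem exists_Z_schattenNorm_one_ge {d₁ d₂ : ℕ} (q : ℝ) (hq : 1 < q)
    (X : Matrix (Fin d₁) (Fin d₁) ℂ) (Y : Matrix (Fin d₂) (Fin d₂) ℂ)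
    (hX : X.PosSemidef) (hY : Y.PosSemidef)
    (hXnorm : schattenNorm q X = 1) (hYnorm : schattenNorm q Y = 1) :
    ∃ Z : Matrix (Fin d₁ × Fin d₂) (Fin d₁ × Fin d₂) ℂ,
      Z.PosSemidef ∧ schattenNorm q Z = 1 ∧
        (Z - (X ⊗ₖ (1 : Matrix (Fin d₂) (Fin d₂) ℂ)
          + (1 : Matrix (Fin d₁) (Fin d₁) ℂ) ⊗ₖ Y
          - (1 : Matrix (Fin d₁ × Fin d₂) (Fin d₁ × Fin d₂) ℂ))).PosSemidef := by
  have hq₀ : 0 < q := by linarith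
  have hX_le_one : (1 - X).PosSemidef := hX.1.posSemidef_one_sub_of_eigenvalues_le_one
    fun i => hXnorm ▸ eigenvalues_le_schattenNorm hX hq₀ i
  have hY_le_one : (1 - Y).PosSemidef := hY.1.posSemidef_one_sub_of_eigenvalues_le_one
    fun i => hYnorm ▸ eigenvalues_le_schattenNorm hY hq₀ i
  refine ⟨X ⊗ₖ Y, hX.kronecker hY, ?_, ?_⟩
  · rw [schattenNorm_kronecker hX hY, hXnorm, hYnorm, one_mul]
  · rw [← one_sub_kronecker_one_sub]
    exact hX_le_one.kronecker hY_le_one
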